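/- Let S be a semidomain. Then S satisfies ACCP if and only if the Laurent polynomial semidomain S[x^{±1}] satisfies ACCP. -/

import Mathlib

open Polynomial

/-- A witness that the commutative semiring `S` embeds into an integral domain. -/
structure SemidomainWitness (S : Type) [CommSemiring S] : Type 1 where
  R : Type
  [commRing : CommRing R]
  [isDomain : IsDomain R]
  f : S →+* R
  inj : Function.Injective f

/-- A semidomain is a commutative semiring that embeds into an integral domain. -/
def IsSemidomain (S : Type) [CommSemiring S] : Prop :=
  Nonempty (SemidomainWitness S)


/-- A commutative monoid with zero satisfies the ascending chain condition on principal ideals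
(of its monoid of nonzero elements) if every ascending chain of principal ideals
`b₀M ⊆ b₁M ⊆ ⋯` with each `bₙ` nonzero stabilizes. -/
def SatisfiesACCP (M : Type) [CommMonoidWithZero M] : Prop :=
  ∀ f : ℕ → M, (∀ n, f n ≠ 0) → (∀ n, f (n + 1) ∣ f n) →
    ∃ N, ∀ n, N ≤ n → f N ∣ f n

/-!
Constants embed `S` into `S[x^{±1}]` and evaluation at `x = 1` retracts this embedding, so
divisibility between constants is reflected and ACCP descends from `S[x^{±1}]` to `S`.

Conversely, for a cancellative monoid ACCP is the well-foundedness of strict divisibility, which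
passes from `S` to `S[x]` (`Polynomial.wfDvdMonoid`). Every nonzero Laurent polynomial is
associated to a unique polynomial with nonzero constant term; this normal form is multiplicative
and reflects divisibility, so it turns chains in `S[x^{±1}]` into chains in `S[x]`.
-/

theorem IsSemidomain.isDomain {S : Type} [CommSemiring S] (hS : IsSemidomain S) : IsDomain S :=
  let ⟨w⟩ := hS
  letI := w.commRing
  letI := w.isDomain
  w.inj.isDomain w.f

namespace SatisfiesACCP

variable {M : Type} [CommMonoidWithZero M]

theorem of_wfDvdMonoid [WfDvdMonoid M] : SatisfiesACCP M := by
  intro f hf0 hf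
  obtain ⟨_, ⟨N, rfl⟩, hmin⟩ :=
    (wellFounded_dvdNotUnit (α := M)).has_min (Set.range f) ⟨f 0, 0, rfl⟩
  refine ⟨N, fun n hn => ?_⟩
  obtain ⟨x, hx⟩ : f n ∣ f N := Nat.rel_of_forall_rel_succ_of_le (Function.swap (· ∣ ·)) hf hn
  by_cases hxu : IsUnit x
  · exact (Associated.symm ⟨hxu.unit, hx.symm⟩).dvd
  · exact absurd ⟨hf0 n, x, hxu, hx⟩ (hmin _ ⟨n, rfl⟩)

theorem wfDvdMonoid [IsCancelMulZero M] (h : SatisfiesACCP M) : WfDvdMonoid M := by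
  refine ⟨wellFounded_iff_isEmpty_descending_chain.mpr ⟨fun ⟨g, hg⟩ => ?_⟩⟩
  have hg' : ∀ n, g (n + 1) ∣ g n ∧ ¬g n ∣ g (n + 1) := fun n => dvd_and_not_dvd_iff.mpr (hg n)
  obtain ⟨N, hN⟩ := h (fun n => g (n + 1)) (fun n => (hg n).1)
    (fun n => (hg' (n + 1)).1)
  exact (hg' (N + 1)).2 (hN (N + 1) N.le_succ)

theorem of_dvd_iff {N : Type} [CommMonoidWithZero N] (φ : M → N) (hφ0 : ∀ a, a ≠ 0 → φ a ≠ 0)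
    (hφ : ∀ a b, a ≠ 0 → b ≠ 0 → (φ a ∣ φ b ↔ a ∣ b)) (h : SatisfiesACCP N) :
    SatisfiesACCP M := by
  intro f hf0 hf
  obtain ⟨N, hN⟩ := h (φ ∘ f) (fun n => hφ0 _ (hf0 n))
    (fun n => (hφ _ _ (hf0 _) (hf0 _)).2 (hf n))
  exact ⟨N, fun n hn => (hφ _ _ (hf0 _) (hf0 _)).1 (hN n hn)⟩

theorem polynomial {S : Type} [CommSemiring S] [IsCancelMulZero S] (h : SatisfiesACCP S) :
    SatisfiesACCP S[X] :=
  have := h.wfDvdMonoid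
  of_wfDvdMonoid

end SatisfiesACCP

namespace LaurentPolynomial

variable {S : Type} [CommSemiring S]

theorem exists_toLaurent_eq_mul_T (f : S[T;T⁻¹]) (hf : f ≠ 0) :
    ∃ p : S[X], p.coeff 0 ≠ 0 ∧ ∃ m : ℤ, p.toLaurent = f * T m := by
  obtain ⟨n, q, hq⟩ := f.exists_T_pow
  have hq0 : q ≠ 0 := by
    rintro rfl
    exact hf ((isUnit_T _).mul_left_eq_zero.mp (by rw [← hq, map_zero]))
  obtain ⟨p, hp⟩ : X ^ q.natTrailingDegree ∣ q :=
    X_pow_dvd_iff.mpr fun d hd => coeff_eq_zero_of_lt_natTrailingDegree hd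
  refine ⟨p, ?_, n - q.natTrailingDegree, ?_⟩
  · rw [← coeff_X_pow_mul, ← hp, zero_add]
    exact coeff_natTrailingDegree_ne_zero.mpr hq0
  · have h : T q.natTrailingDegree * p.toLaurent = f * T n := by
      rw [← toLaurent_X_pow, ← map_mul, ← hp, hq]
    rw [T_sub, ← mul_assoc, ← h, mul_right_comm, ← T_add, add_neg_cancel, T_zero, one_mul]

theorem eq_of_toLaurent_eq_mul_T_natCast {p q : S[X]} (hp : p.coeff 0 ≠ 0) {n : ℕ}
    (h : p.toLaurent = q.toLaurent * T n) : p = q := by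
  have hpq : p = q * X ^ n := toLaurent_injective (by rw [h, map_mul, toLaurent_X_pow])
  cases n with
  | zero => rwa [pow_zero, mul_one] at hpq
  | succ k => exact (hp (by rw [hpq, coeff_mul_X_pow', if_neg (by omega)])).elim

theorem eq_of_toLaurent_eq_mul_T {p q : S[X]} (hp : p.coeff 0 ≠ 0) (hq : q.coeff 0 ≠ 0) {m : ℤ}
    (h : p.toLaurent = q.toLaurent * T m) : p = q := by
  obtain ⟨n, rfl | rfl⟩ := Int.eq_nat_or_neg m
  · exact eq_of_toLaurent_eq_mul_T_natCast hp h
  · refine (eq_of_toLaurent_eq_mul_T_natCast hq (n := n) ?_).symm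
    rw [h, mul_assoc, ← T_add, neg_add_cancel, T_zero, mul_one]

end LaurentPolynomial

section LaurentPolynomial

open LaurentPolynomial

variable {S : Type} [CommSemiring S]

theorem SatisfiesACCP.laurentPolynomial [NoZeroDivisors S] (h : SatisfiesACCP S[X]) :
    SatisfiesACCP S[T;T⁻¹] := by
  have hrep (f : S[T;T⁻¹]) :
      ∃ p : S[X], f ≠ 0 → p.coeff 0 ≠ 0 ∧ ∃ m : ℤ, p.toLaurent = f * T m := by
    by_cases hf : f = 0
    · exact ⟨0, fun hne => (hne hf).elim⟩
    · obtain ⟨p, hp⟩ := exists_toLaurent_eq_mul_T f hf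
      exact ⟨p, fun _ => hp⟩
  choose P hP using hrep
  refine h.of_dvd_iff P (fun f hf hP0 => (hP f hf).1 (by rw [hP0, coeff_zero]))
    fun a b ha hb => ?_
  obtain ⟨ha0, ma, hma⟩ := hP a ha
  obtain ⟨hb0, mb, hmb⟩ := hP b hb
  constructor
  · intro hab
    simpa only [hma, hmb, (isUnit_T _).dvd_mul_right, (isUnit_T _).mul_right_dvd]
      using map_dvd toLaurent hab
  · rintro ⟨c, rfl⟩
    obtain ⟨hc0, mc, hmc⟩ := hP c (right_ne_zero_of_mul hb)
    have hac0 : (P a * P c).coeff 0 ≠ 0 := by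
      rw [mul_coeff_zero]
      exact mul_ne_zero ha0 hc0
    refine ⟨P c, eq_of_toLaurent_eq_mul_T hb0 hac0 (m := mb - (ma + mc)) ?_⟩
    calc (P (a * c)).toLaurent = a * c * T (ma + mc + (mb - (ma + mc))) := by
          rw [hmb, add_sub_cancel]
      _ = _ := by rw [map_mul, hma, hmc, T_add, T_add]; ring

theorem SatisfiesACCP.of_laurentPolynomial (h : SatisfiesACCP S[T;T⁻¹]) : SatisfiesACCP S := by
  let ε : S[T;T⁻¹] →+* S := eval₂ (RingHom.id S) 1
  have hεC (a : S) : ε (LaurentPolynomial.C a) = a := eval₂_C _ _ a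
  refine h.of_dvd_iff LaurentPolynomial.C (fun a ha hCa => ha (by rw [← hεC a, hCa, map_zero]))
    fun a b _ _ => ⟨fun hab => ?_, map_dvd LaurentPolynomial.C⟩
  simpa only [hεC] using map_dvd ε hab

end LaurentPolynomial

/-- For a semidomain `S`: `S` satisfies ACCP if and only if the Laurent polynomial semidomain
`S[x^{±1}]` satisfies ACCP. -/
theorem stmt10 (S : Type) [CommSemiring S] (hS : IsSemidomain S) :
    SatisfiesACCP S ↔ SatisfiesACCP (LaurentPolynomial S) := by
  have := hS.isDomain
  exact ⟨fun h => h.polynomial.laurentPolynomial, .of_laurentPolynomial⟩
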